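/- arXiv:0910.2589 — 4 statements merged into one kernel-verified Lean document; each statement's English description precedes it below -/
import Mathlib

section
/- Let k be a field, let f(x)=f0+f1x+...+f6x^6 and h(x)=h0+h1x+h2x^2+h3x^3 be polynomials over k, and let (x,y),(u,v) ∈ k² satisfy y²+h(x)y=f(x) and v²+h(u)v=f(u), with x ≠ u. Define F0(x,u)=2f0+f1(x+u)+2f2 xu+f3(x+u)xu+2f4(xu)²+f5(x+u)(xu)²+2f6(xu)³ and κ4=(F0(x,u)−2yv−h(x)v−h(u)y)/(x−u)². Then K(1, x+u, xu, κ4)=0, where K is the generalized Kummer quartic. -/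
/-- The generalized Kummer quartic. -/
def kummerK {R : Type*} [CommRing R]
    (f0 f1 f2 f3 f4 f5 f6 h0 h1 h2 h3 k1 k2 k3 k4 : R) : R :=
  (k2^2 - 4*k1*k3) * k4^2
  + (-4*f0*k1^3 - 2*f1*k1^2*k2 - 4*f2*k1^2*k3 - 2*f3*k1*k2*k3 - 4*f4*k1*k3^2
     - 2*f5*k2*k3^2 - 4*f6*k3^3 - h0^2*k1^3 - h0*h1*k1^2*k2
     - h0*h2*(k1*k2^2 - 2*k1^2*k3) - h0*h3*(k2^3 - 3*k1*k2*k3)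
     - h1^2*k1^2*k3 - h1*h2*k1*k2*k3 - h1*h3*(k2^2*k3 - 2*k1*k3^2)
     - h2^2*k1*k3^2 - h2*h3*k2*k3^2 - h3^2*k3^3) * k4
  + ((-4*f0*f2 - f0*h1^2 + f1^2 + f1*h0*h1 - f2*h0^2)*k1^4
   + (-4*f0*f3 - 2*f0*h1*h2 + f1*h0*h2 - f3*h0^2)*k1^3*k2
   + (2*f0*h1*h3 - 2*f1*f3 - f1*h0*h3 - f1*h1*h2 + 2*f2*h0*h2 - f3*h0*h1)*k1^3*k3
   + (-4*f0*f4 - 2*f0*h1*h3 - f0*h2^2 + f1*h0*h3 - f4*h0^2)*k1^2*k2^2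
   + (4*f0*f5 + 2*f0*h2*h3 - 4*f1*f4 - f1*h1*h3 - f1*h2^2 + 2*f2*h0*h3
      + f3*h0*h2 - 2*f4*h0*h1 + f5*h0^2)*k1^2*k2*k3
   + (-4*f0*f6 - f0*h3^2 + 2*f1*f5 + f1*h2*h3 - 4*f2*f4 - f2*h2^2 + f3^2
      + f3*h0*h3 + f3*h1*h2 - f4*h1^2 + f5*h0*h1 - f6*h0^2)*k1^2*k3^2
   + (-4*f0*f5 - 2*f0*h2*h3 - f5*h0^2)*k1*k2^3
   + (8*f0*f6 + 2*f0*h3^2 - 4*f1*f5 - 2*f1*h2*h3 + f3*h0*h3 - 2*f5*h0*h1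
      + 2*f6*h0^2)*k1*k2^2*k3
   + (4*f1*f6 + f1*h3^2 - 4*f2*f5 - 2*f2*h2*h3 + f3*h1*h3 + 2*f4*h0*h3
      - f5*h0*h2 - f5*h1^2 + 2*f6*h0*h1)*k1*k2*k3^2
   + (-2*f3*f5 - f3*h2*h3 + 2*f4*h1*h3 - f5*h0*h3 - f5*h1*h2
      + 2*f6*h0*h2)*k1*k3^3
   + (-4*f0*f6 - f0*h3^2 - f6*h0^2)*k2^4
   + (-4*f1*f6 - f1*h3^2 - 2*f6*h0*h1)*k2^3*k3
   + (-4*f2*f6 - f2*h3^2 + f5*h0*h3 - 2*f6*h0*h2 - f6*h1^2)*k2^2*k3^2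
   + (-4*f3*f6 - f3*h3^2 + f5*h1*h3 - 2*f6*h1*h2)*k2*k3^3
   + (-4*f4*f6 - f4*h3^2 + f5^2 + f5*h2*h3 - f6*h2^2)*k3^4)

theorem kummer_point_on_quartic {k : Type*} [Field k]
    (f0 f1 f2 f3 f4 f5 f6 h0 h1 h2 h3 : k) (x y u v : k)
    (hxy : y^2 + (h0 + h1*x + h2*x^2 + h3*x^3)*y
      = f0 + f1*x + f2*x^2 + f3*x^3 + f4*x^4 + f5*x^5 + f6*x^6)
    (huv : v^2 + (h0 + h1*u + h2*u^2 + h3*u^3)*v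
      = f0 + f1*u + f2*u^2 + f3*u^3 + f4*u^4 + f5*u^5 + f6*u^6)
    (hne : x ≠ u) :
    kummerK f0 f1 f2 f3 f4 f5 f6 h0 h1 h2 h3 1 (x + u) (x*u)
      ((2*f0 + f1*(x+u) + 2*f2*(x*u) + f3*(x+u)*(x*u) + 2*f4*(x*u)^2
          + f5*(x+u)*(x*u)^2 + 2*f6*(x*u)^3
        - 2*y*v - (h0 + h1*x + h2*x^2 + h3*x^3)*v
        - (h0 + h1*u + h2*u^2 + h3*u^3)*y) / (x - u)^2) = 0 := by

  have hd : (x - u) ≠ 0 := sub_ne_zero.mpr hne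
  have hd2 : ((x - u)^2) ≠ 0 := pow_ne_zero _ hd
  set G : k := (2*f0 + f1*(x+u) + 2*f2*(x*u) + f3*(x+u)*(x*u) + 2*f4*(x*u)^2
          + f5*(x+u)*(x*u)^2 + 2*f6*(x*u)^3
        - 2*y*v - (h0 + h1*x + h2*x^2 + h3*x^3)*v
        - (h0 + h1*u + h2*u^2 + h3*u^3)*y) with hG
  have key : ∀ k4 : k, k4 * (x - u)^2 = G → kummerK f0 f1 f2 f3 f4 f5 f6 h0 h1 h2 h3 1 (x + u) (x*u) k4 = 0 := by
    intro k4 hk4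
    have h2 : kummerK f0 f1 f2 f3 f4 f5 f6 h0 h1 h2 h3 1 (x + u) (x*u) k4 * ((x - u)^2)^2 = 0 := by
      rw [kummerK, hG] at *
      linear_combination (norm := ring) (4*u^2*v^2 + -8*x*u*v^2 + 4*x^2*v^2 + 4*h3*u^5*v + -8*h3*x*u^4*v + 4*h3*x^2*u^3*v + h3^2*u^8 + -2*h3^2*x*u^7 + h3^2*x^2*u^6 + 4*h2*u^4*v + -8*h2*x*u^3*v + 4*h2*x^2*u^2*v + 2*h2*h3*u^7 + -4*h2*h3*x*u^6 + 2*h2*h3*x^2*u^5 + h2^2*u^6 + -2*h2^2*x*u^5 + h2^2*x^2*u^4 + 4*h1*u^3*v + -8*h1*x*u^2*v + 4*h1*x^2*u*v + 2*h1*h3*u^6 + -4*h1*h3*x*u^5 + 2*h1*h3*x^2*u^4 + 2*h1*h2*u^5 + -4*h1*h2*x*u^4 + 2*h1*h2*x^2*u^3 + h1^2*u^4 + -2*h1^2*x*u^3 + h1^2*x^2*u^2 + 4*h0*u^2*v + -8*h0*x*u*v + 4*h0*x^2*v + 2*h0*h3*u^5 + -4*h0*h3*x*u^4 + 2*h0*h3*x^2*u^3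 + 2*h0*h2*u^4 + -4*h0*h2*x*u^3 + 2*h0*h2*x^2*u^2 + 2*h0*h1*u^3 + -4*h0*h1*x*u^2 + 2*h0*h1*x^2*u + h0^2*u^2 + -2*h0^2*x*u + h0^2*x^2) * hxy + (h3^2*x^6*u^2 + -2*h3^2*x^7*u + h3^2*x^8 + 2*h2*h3*x^5*u^2 + -4*h2*h3*x^6*u + 2*h2*h3*x^7 + h2^2*x^4*u^2 + -2*h2^2*x^5*u + h2^2*x^6 + 2*h1*h3*x^4*u^2 + -4*h1*h3*x^5*u + 2*h1*h3*x^6 + 2*h1*h2*x^3*u^2 + -4*h1*h2*x^4*u + 2*h1*h2*x^5 + h1^2*x^2*u^2 + -2*h1^2*x^3*u + h1^2*x^4 + 2*h0*h3*x^3*u^2 + -4*h0*h3*x^4*u + 2*h0*h3*x^5 + 2*h0*h2*x^2*u^2 + -4*h0*h2*x^3*u + 2*h0*h2*x^4 + 2*h0*h1*x*u^2 + -4*h0*h1*x^2*u + 2*h0*h1*x^3 + h0^2*u^2 + -2*h0^2*x*u + h0^2*x^2 + 4*f6*x^6*u^2 + -8*f6*x^7*u + 4*f6*x^8 + 4*f5*x^5*u^2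 + -8*f5*x^6*u + 4*f5*x^7 + 4*f4*x^4*u^2 + -8*f4*x^5*u + 4*f4*x^6 + 4*f3*x^3*u^2 + -8*f3*x^4*u + 4*f3*x^5 + 4*f2*x^2*u^2 + -8*f2*x^3*u + 4*f2*x^4 + 4*f1*x*u^2 + -8*f1*x^2*u + 4*f1*x^3 + 4*f0*u^2 + -8*f0*x*u + 4*f0*x^2) * huv + (((x+u)^2 - 4*(x*u))*(k4*(x-u)^2 + (-2*y*v + -1*h3*u^3*y + -1*h3*x^3*v + -1*h2*u^2*y + -1*h2*x^2*v + -1*h1*u*y + -1*h1*x*v + -1*h0*v + -1*h0*y + 2*f6*x^3*u^3 + f5*x^2*u^3 + f5*x^3*u^2 + 2*f4*x^2*u^2 + f3*x*u^2 + f3*x^2*u + 2*f2*x*u + f1*u + f1*x + 2*f0)) + ((-1*h3^2*x^3*u^3 + -1*h2*h3*x^2*u^3 + -1*h2*h3*x^3*u^2 + -1*h2^2*x^2*u^2 + -1*h1*h3*x*u^3 + -1*h1*h3*x^3*u + -1*h1*h2*x*u^2 + -1*h1*h2*x^2*u + -1*h1^2*x*u + -1*h0*h3*u^3 + -1*h0*h3*x^3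 + -1*h0*h2*u^2 + -1*h0*h2*x^2 + -1*h0*h1*u + -1*h0*h1*x + -1*h0^2 + -4*f6*x^3*u^3 + -2*f5*x^2*u^3 + -2*f5*x^3*u^2 + -4*f4*x^2*u^2 + -2*f3*x*u^2 + -2*f3*x^2*u + -4*f2*x*u + -2*f1*u + -2*f1*x + -4*f0))*(x-u)^2) * hk4
    rcases mul_eq_zero.mp h2 with h | h
    · exact h
    · exact absurd h (pow_ne_zero _ hd2)
  exact key _ (div_mul_cancel₀ _ hd2)
end

section
/- Let k be an algebraically closed field of characteristic 2 and let f ∈ k[x] with deg f ≤ 6. Then there exists a polynomial u ∈ k[x] with deg u ≤ 3 such that f + x·u + u² = c1·x + c3·x³ + c5·x⁵ for some c1,c3,c5 ∈ k. (This reduces a curve y² + x·y = f(x) to the normal form y² + x·y = f1x + f3x³ + f5x⁵.) -/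
open Polynomial in
theorem normal_form_h_x {k : Type*} [Field k] [IsAlgClosed k] [CharP k 2]
    (f : k[X]) (hf : f.degree ≤ 6) :
    ∃ u : k[X], u.degree ≤ 3 ∧ ∃ c1 c3 c5 : k,
      f + X * u + u^2 = C c1 * X + C c3 * X^3 + C c5 * X^5 := by
  obtain ⟨u0, hu0⟩ : ∃ a : k, a ^ 2 = f.coeff 0 :=
    IsAlgClosed.exists_pow_nat_eq (f.coeff 0) two_pos
  obtain ⟨u3, hu3⟩ : ∃ a : k, a ^ 2 = f.coeff 6 :=
    IsAlgClosed.exists_pow_nat_eq (f.coeff 6) two_pos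
  obtain ⟨u2, hu2⟩ : ∃ a : k, a ^ 2 = f.coeff 4 + u3 :=
    IsAlgClosed.exists_pow_nat_eq _ two_pos
  obtain ⟨u1, hu1⟩ : ∃ a : k, a ^ 2 + a + f.coeff 2 = 0 := by
    obtain ⟨a, ha⟩ := IsAlgClosed.exists_root (X ^ 2 + X + C (f.coeff 2))
      (by
        have h1 : (X ^ 2 + X + C (f.coeff 2) : k[X]).degree = 2 := by
          compute_degree!
        rw [h1]; norm_num)
    exact ⟨a, by simpa [IsRoot, eval_add, eval_pow] using ha⟩
  refine ⟨C u0 + C u1 * X + C u2 * X ^ 2 + C u3 * X ^ 3, ?_, f.coeff 1 + u0,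
    f.coeff 3 + u2, f.coeff 5, ?_⟩
  · compute_degree
  · have h2 : (2 : k[X]) = 0 := by
      have := CharP.cast_eq_zero k[X] 2
      exact_mod_cast this
    have hfe : f = C (f.coeff 0) + C (f.coeff 1) * X + C (f.coeff 2) * X ^ 2 +
        C (f.coeff 3) * X ^ 3 + C (f.coeff 4) * X ^ 4 + C (f.coeff 5) * X ^ 5 +
        C (f.coeff 6) * X ^ 6 := by
      ext n
      by_cases hn : n ≤ 6
      · interval_cases n <;> simp [coeff_X_pow]
      · rw [f.coeff_eq_zero_of_degree_lt
          (hf.trans_lt (by exact_mod_cast (by omega : 6 < n)))]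
        simp only [coeff_add, coeff_C_mul, coeff_X_pow, coeff_X, coeff_C]
        split_ifs <;> (first | (exfalso; omega) | simp)
    have H0 : (C u0 : k[X]) ^ 2 = C (f.coeff 0) := by rw [← map_pow, hu0]
    have H3 : (C u3 : k[X]) ^ 2 = C (f.coeff 6) := by rw [← map_pow, hu3]
    have H2 : (C u2 : k[X]) ^ 2 = C (f.coeff 4) + C u3 := by
      rw [← map_pow, hu2, map_add]
    have H1 : (C u1 : k[X]) ^ 2 + C u1 + C (f.coeff 2) = 0 := by
      rw [← map_pow, ← map_add, ← map_add, hu1, map_zero]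
    simp only [map_add]
    conv_lhs => rw [hfe]
    linear_combination (H0 : (C u0 : k[X]) ^ 2 = C (f.coeff 0))
      + X ^ 2 * H1 + X ^ 4 * H2 + X ^ 6 * H3
      + (C (f.coeff 0) + C u0 * C u1 * X + C u0 * C u2 * X ^ 2
        + (C u0 * C u3 + C u1 * C u2) * X ^ 3
        + (C (f.coeff 4) + C u3 + C u1 * C u3) * X ^ 4
        + C u2 * C u3 * X ^ 5 + C (f.coeff 6) * X ^ 6) * h2
end

section
/- Let k be an algebraically closed field of characteristic 2 and let f ∈ k[x] with deg f ≤ 6. Then there exists a polynomial u ∈ k[x] with deg u ≤ 3 such that f + (x²+x)·u + u² = c1·x + c3·x³ + c5·x⁵ for some c1,c3,c5 ∈ k. (This reduces a curve y² + (x²+x)y = f(x) to the normal form y² + (x²+x)y = f1x + f3x³ + f5x⁵.) -/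
/-!
Write `u = a₀ + a₁x + a₂x² + a₃x³`. In characteristic 2 squaring is additive, so
`u² = a₀² + a₁²x² + a₂²x⁴ + a₃²x⁶` and the even coefficients of `f + (x² + x)u + u²` are
`f₀ + a₀²`, `f₂ + a₀ + a₁ + a₁²`, `f₄ + a₂ + a₃ + a₂²` and `f₆ + a₃²`. Over an algebraically closed
field they can be killed one after another: `a₀` and `a₃` are square roots, and then `a₁` and `a₂`
solve Artin–Schreier equations `a² + a = c`.
-/

open Polynomial

theorem IsAlgClosed.exists_sq_add_self_eq {k : Type*} [Field k] [IsAlgClosed k] (c : k) :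
    ∃ a : k, a ^ 2 + a = c := by
  have hdeg : (X ^ 2 + X - C c : k[X]).degree ≠ 0 := by
    have : (X ^ 2 + X - C c : k[X]).degree = 2 := by compute_degree!
    simp [this]
  obtain ⟨a, ha⟩ := IsAlgClosed.exists_root _ hdeg
  exact ⟨a, by simpa [sub_eq_zero] using ha⟩

theorem CharTwo.mul_add_sq_cubic {R : Type*} [CommRing R] [CharP R 2] (x a₀ a₁ a₂ a₃ : R) :
    (x ^ 2 + x) * (a₀ + a₁ * x + a₂ * x ^ 2 + a₃ * x ^ 3)
        + (a₀ + a₁ * x + a₂ * x ^ 2 + a₃ * x ^ 3) ^ 2 =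
      a₀ ^ 2 + a₀ * x + (a₁ ^ 2 + a₁ + a₀) * x ^ 2 + (a₁ + a₂) * x ^ 3
        + (a₂ ^ 2 + a₂ + a₃) * x ^ 4 + a₃ * x ^ 5 + a₃ ^ 2 * x ^ 6 := by
  simp only [CharTwo.add_sq, mul_pow, ← pow_mul]
  ring

theorem Polynomial.eq_sum_C_mul_X_pow_of_degree_le_six {R : Type*} [Semiring R] {f : R[X]}
    (hf : f.degree ≤ 6) :
    f = C (f.coeff 0) + C (f.coeff 1) * X + C (f.coeff 2) * X ^ 2 + C (f.coeff 3) * X ^ 3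
      + C (f.coeff 4) * X ^ 4 + C (f.coeff 5) * X ^ 5 + C (f.coeff 6) * X ^ 6 := by
  conv_lhs => rw [f.as_sum_range_C_mul_X_pow' (Nat.lt_succ_of_le (natDegree_le_of_degree_le hf))]
  simp [Finset.sum_range_succ]

theorem normal_form_h_x_sq_add_x {k : Type*} [Field k] [IsAlgClosed k] [CharP k 2]
    (f : k[X]) (hf : f.degree ≤ 6) :
    ∃ u : k[X], u.degree ≤ 3 ∧ ∃ c1 c3 c5 : k,
      f + (X^2 + X) * u + u^2 = C c1 * X + C c3 * X^3 + C c5 * X^5 := by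
  obtain ⟨a₀, ha₀⟩ := IsAlgClosed.exists_pow_nat_eq (-f.coeff 0) two_pos
  obtain ⟨a₃, ha₃⟩ := IsAlgClosed.exists_pow_nat_eq (-f.coeff 6) two_pos
  obtain ⟨a₁, ha₁⟩ := IsAlgClosed.exists_sq_add_self_eq (-(f.coeff 2 + a₀))
  obtain ⟨a₂, ha₂⟩ := IsAlgClosed.exists_sq_add_self_eq (-(f.coeff 4 + a₃))
  refine ⟨C a₀ + C a₁ * X + C a₂ * X ^ 2 + C a₃ * X ^ 3, by compute_degree,
    f.coeff 1 + a₀, f.coeff 3 + a₁ + a₂, f.coeff 5 + a₃, ?_⟩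
  rw [add_assoc, CharTwo.mul_add_sq_cubic]
  nth_rw 1 [eq_sum_C_mul_X_pow_of_degree_le_six hf]
  -- fold each coefficient into a single `C` so that the choices of the `aᵢ` apply
  simp only [← C_pow, ← C_add, ha₀, ha₁, ha₂, ha₃]
  simp only [C_add, C_neg]
  ring
end

section
/- Let k be an algebraically closed field of characteristic 2 and consider the affine curve C: y² + (x²+x)y = f1x + f3x³ + f5x⁵ over k. Set β = f1+f3+f5+f1²+f3²+f5². Then C has a singular point if and only if f1·β = 0. -/
theorem singular_iff_h_x_sq_add_x {k : Type*} [Field k] [IsAlgClosed k] [CharP k 2]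
    (f1 f3 f5 : k) :
    (∃ a b : k,
        b^2 + (a^2 + a)*b + f1*a + f3*a^3 + f5*a^5 = 0 ∧
        b + f1 + f3*a^2 + f5*a^4 = 0 ∧
        a^2 + a = 0)
      ↔ f1 * (f1 + f3 + f5 + f1^2 + f3^2 + f5^2) = 0 := by
  have h2 : (2 : k) = 0 := by exact_mod_cast CharP.cast_eq_zero k 2
  constructor
  · rintro ⟨a, b, h1, hb, ha⟩
    have ha' : a * (a + 1) = 0 := by linear_combination ha
    rcases mul_eq_zero.mp ha' with h | h
    · subst h
      have hb0 : b = 0 := by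
        have : b ^ 2 = 0 := by linear_combination h1
        exact pow_eq_zero_iff two_ne_zero |>.mp this
      subst hb0
      have hf1 : f1 = 0 := by linear_combination hb
      rw [hf1]; ring
    · have ha1 : a = 1 := by
        have : a = -1 := eq_neg_of_add_eq_zero_left h
        rw [this, neg_eq_iff_add_eq_zero]; linear_combination h2
      subst ha1
      have hβ : f1 + f3 + f5 + f1^2 + f3^2 + f5^2 = 0 := by
        linear_combination h1 + (f1 + f3 + f5 - b) * hb +
          (-(f1*f3 + f1*f5 + f3*f5) - b) * h2
      rw [hβ]; ring
  · intro hmul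
    rcases mul_eq_zero.mp hmul with hf1 | hβ
    · exact ⟨0, 0, by rw [hf1]; ring, by rw [hf1]; ring, by ring⟩
    · refine ⟨1, f1 + f3 + f5, ?_, ?_, ?_⟩
      · linear_combination hβ + (f1*f3 + f1*f5 + f3*f5 + f1 + f3 + f5) * h2
      · linear_combination (f1 + f3 + f5) * h2
      · linear_combination h2
end
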